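/- Let G and G' be iCGS, R an A-bisimulation, and q R q'. Then for every state A-formula φ of ATL* (under either the subjective or objective imperfect-information memoryless semantics), (G, q) ⊨ φ iff (G', q') ⊨ φ. Moreover, if runs λ, λ' satisfy λ[i] R λ'[i] for all i, then for every path A-formula ψ, (G, λ) ⊨ ψ iff (G', λ') ⊨ ψ. -/

import Mathlib

/-- An imperfect-information concurrent game structure (iCGS), given as raw data;
the defining axioms are collected in `iCGS.Valid`. -/
structure iCGS (Ag AP S Act : Type) where
  init : S
  indist : Ag → S → S → Prop
  protocol : Ag → S → Set Act
  trans : S → (Ag → Act) → S → Prop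
  label : S → Set AP

namespace iCGS

variable {Ag AP S S' Act Act' : Type}

/-- The axioms of an iCGS. -/
def Valid (G : iCGS Ag AP S Act) : Prop :=
  (∀ i, Equivalence (G.indist i)) ∧
  (∀ i s, (G.protocol i s).Nonempty) ∧
  (∀ i s s', G.indist i s s' → G.protocol i s = G.protocol i s') ∧
  (∀ s a, (∃ s', G.trans s a s') ↔ ∀ i, a i ∈ G.protocol i s)

/-- Common-knowledge reachability for coalition `A`:
reflexive-transitive closure of the union of the `∼ᵢ`, `i ∈ A`. -/
def ck (G : iCGS Ag AP S Act) (A : Set Ag) : S → S → Prop :=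
  Relation.ReflTransGen (fun s s' => ∃ i ∈ A, G.indist i s s')

/-- Common-knowledge neighbourhood `C_A(q)`. -/
def CKN (G : iCGS Ag AP S Act) (A : Set Ag) (q : S) : Set S := {r | G.ck A q r}

/-- "Everybody knows" neighbourhood `E_A(q)`. -/
def EKN (G : iCGS Ag AP S Act) (A : Set Ag) (q : S) : Set S :=
  {r | ∃ i ∈ A, G.indist i q r}

/-- `σ` is a partial uniform strategy for coalition `A` with domain `Q`. -/
def IsPStrat (G : iCGS Ag AP S Act) (A : Set Ag) (Q : Set S) (σ : Ag → S → Act) : Prop :=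
  (∀ i ∈ A, ∀ s ∈ Q, σ i s ∈ G.protocol i s) ∧
  (∀ i ∈ A, ∀ s ∈ Q, ∀ t ∈ Q, G.indist i s t → σ i s = σ i t)

/-- `σ` is a (total) uniform memoryless strategy for coalition `A`. -/
def IsStrat (G : iCGS Ag AP S Act) (A : Set Ag) (σ : Ag → S → Act) : Prop :=
  G.IsPStrat A Set.univ σ

/-- Successors of `s` under joint actions compatible with `σ` on coalition `A`. -/
def succ (G : iCGS Ag AP S Act) (A : Set Ag) (σ : Ag → S → Act) (s : S) : Set S :=
  {t | ∃ a : Ag → Act, (∀ i ∈ A, a i = σ i s) ∧ G.trans s a t}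

/-- Objective outcome set of strategy `σ` at `q` (runs as infinite state sequences). -/
def OutObj (G : iCGS Ag AP S Act) (A : Set Ag) (σ : Ag → S → Act) (q : S) :
    Set (ℕ → S) :=
  {lam | lam 0 = q ∧ ∀ j, lam (j + 1) ∈ G.succ A σ (lam j)}

/-- Subjective outcome set: union of objective outcomes over states indistinguishable
from `q` for some member of the coalition. -/
def OutSubj (G : iCGS Ag AP S Act) (A : Set Ag) (σ : Ag → S → Act) (q : S) :
    Set (ℕ → S) :=
  {lam | ∃ i ∈ A, ∃ r, G.indist i q r ∧ lam ∈ G.OutObj A σ r}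

/-- Outcome set: subjective (`x = true`) or objective (`x = false`).
(For a nonempty coalition the subjective case coincides with the union of
objective outcomes over indistinguishable states, by reflexivity; for the
empty coalition it degenerates to the objective case.) -/
def Out (G : iCGS Ag AP S Act) (x : Bool) (A : Set Ag) (σ : Ag → S → Act) (q : S) :
    Set (ℕ → S) :=
  if x then G.OutObj A σ q ∪ G.OutSubj A σ q else G.OutObj A σ q

/-- `R` is a simulation for coalition `A` from `G` to `G'` (Def. of simulation):
existence of a strategy simulator over common-knowledge neighbourhoods with
(a) atom agreement, (b) epistemic back-condition, (c) strategy transfer, and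
(2) injectivity modulo common-knowledge neighbourhoods. -/
def IsSimulation (G : iCGS Ag AP S Act) (G' : iCGS Ag AP S' Act') (A : Set Ag)
    (R : S → S' → Prop) : Prop :=
  (∃ ST : Set S → Set S' → (Ag → S → Act) → (Ag → S' → Act'),
    ∀ q q', R q q' →
      (∀ σ, G.IsPStrat A (G.CKN A q) σ →
        G'.IsPStrat A (G'.CKN A q') (ST (G.CKN A q) (G'.CKN A q') σ)) ∧
      (∀ r ∈ G.CKN A q, ∀ r' ∈ G'.CKN A q', R r r' →
        ∀ σ, G.IsPStrat A (G.CKN A q) σ →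
          ∀ s' ∈ G'.succ A (ST (G.CKN A q) (G'.CKN A q') σ) r',
            ∃ s ∈ G.succ A σ r, R s s')) ∧
  (∀ q q', R q q' → G.label q = G'.label q') ∧
  (∀ q q', R q q' → ∀ i ∈ A, ∀ r', G'.indist i q' r' →
    ∃ r, G.indist i q r ∧ R r r') ∧
  (∀ q₁ q₂ q', R q₁ q' → R q₂ q' → G.CKN A q₁ = G.CKN A q₂)

/-- `R` is a bisimulation for `A` iff both `R` and its converse are `A`-simulations. -/
def IsBisimulation (G : iCGS Ag AP S Act) (G' : iCGS Ag AP S' Act') (A : Set Ag)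
    (R : S → S' → Prop) : Prop :=
  G.IsSimulation G' A R ∧ G'.IsSimulation G A (fun q' q => R q q')

end iCGS
mutual
/-- State formulas of ATL*. -/
inductive SF (AP Ag : Type) : Type where
  | atom : AP → SF AP Ag
  | neg : SF AP Ag → SF AP Ag
  | imp : SF AP Ag → SF AP Ag → SF AP Ag
  | coal : Set Ag → PF AP Ag → SF AP Ag
/-- Path formulas of ATL*. -/
inductive PF (AP Ag : Type) : Type where
  | of : SF AP Ag → PF AP Ag
  | neg : PF AP Ag → PF AP Ag
  | imp : PF AP Ag → PF AP Ag → PF AP Ag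
  | next : PF AP Ag → PF AP Ag
  | untl : PF AP Ag → PF AP Ag → PF AP Ag
end

variable {Ag AP S Act : Type}

mutual
/-- Satisfaction of ATL* state formulas; `x = true` is the subjective,
`x = false` the objective imperfect-information memoryless semantics. -/
def SSat (G : iCGS Ag AP S Act) (x : Bool) : S → SF AP Ag → Prop
  | s, .atom p => p ∈ G.label s
  | s, .neg φ => ¬ SSat G x s φ
  | s, .imp φ ψ => SSat G x s φ → SSat G x s ψ
  | s, .coal A ψ =>
      ∃ σ, G.IsStrat A σ ∧ ∀ lam ∈ G.Out x A σ s, PSat G x lam ψ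
/-- Satisfaction of ATL* path formulas on runs. -/
def PSat (G : iCGS Ag AP S Act) (x : Bool) : (ℕ → S) → PF AP Ag → Prop
  | lam, .of φ => SSat G x (lam 0) φ
  | lam, .neg ψ => ¬ PSat G x lam ψ
  | lam, .imp ψ χ => PSat G x lam ψ → PSat G x lam χ
  | lam, .next ψ => PSat G x (fun n => lam (n + 1)) ψ
  | lam, .untl ψ χ => ∃ j, PSat G x (fun n => lam (n + j)) χ ∧
      ∀ k < j, PSat G x (fun n => lam (n + k)) ψ
end

mutual
/-- `φ` is an `A`-formula: `A` is the only coalition occurring in it. -/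
def SOnly (A : Set Ag) : SF AP Ag → Prop
  | .atom _ => True
  | .neg φ => SOnly A φ
  | .imp φ ψ => SOnly A φ ∧ SOnly A ψ
  | .coal B ψ => B = A ∧ POnly A ψ
def POnly (A : Set Ag) : PF AP Ag → Prop
  | .of φ => SOnly A φ
  | .neg ψ => POnly A ψ
  | .imp ψ χ => POnly A ψ ∧ POnly A χ
  | .next ψ => POnly A ψ
  | .untl ψ χ => POnly A ψ ∧ POnly A χ
end

/-!
Induction on formulas; the only non-trivial case is `⟨⟨A⟩⟩ψ`. Given a uniform strategy `σ`
on `G`, the strategy simulator turns its restriction to each neighbourhood `C_A(t)` with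
`R t t'` into a partial uniform strategy on `C_A(t')`. The neighbourhoods are equivalence
classes of `ck`, and by injectivity modulo common knowledge `C_A(t')` determines `C_A(t)`,
so these pieces glue (completed by an arbitrary uniform strategy elsewhere) into a uniform
strategy `σ'` on `G'`. The commutation property lifts every `σ'`-outcome in `G'`, step by
step, to an `R`-related `σ`-outcome in `G`, and the path formula transfers along related
runs by induction. The converse simulation gives the other direction.
-/

namespace iCGS

variable {S' Act' : Type} {G : iCGS Ag AP S Act} {G' : iCGS Ag AP S' Act'} {A : Set Ag}

theorem ck_symm (hG : G.Valid) {s t : S} (h : G.ck A s t) : G.ck A t s :=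
  haveI : Std.Symm fun s s' => ∃ i ∈ A, G.indist i s s' :=
    ⟨fun _ _ ⟨i, hi, h⟩ => ⟨i, hi, (hG.1 i).symm h⟩⟩
  Relation.ReflTransGen.stdSymm.symm _ _ h

theorem mem_CKN_self (q : S) : q ∈ G.CKN A q :=
  Relation.ReflTransGen.refl

theorem CKN_eq_of_ck (hG : G.Valid) {s t : S} (h : G.ck A s t) : G.CKN A s = G.CKN A t :=
  Set.ext fun _ => ⟨(ck_symm hG h).trans, h.trans⟩

theorem CKN_eq_of_mem_of_mem (hG : G.Valid) {s t u : S} (hs : u ∈ G.CKN A s)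
    (ht : u ∈ G.CKN A t) : G.CKN A s = G.CKN A t :=
  (CKN_eq_of_ck hG hs).trans (CKN_eq_of_ck hG ht).symm

theorem IsStrat.isPStrat {σ : Ag → S → Act} (hσ : G.IsStrat A σ) (Q : Set S) :
    G.IsPStrat A Q σ :=
  ⟨fun i hi s _ => hσ.1 i hi s trivial, fun i hi s _ t _ => hσ.2 i hi s trivial t trivial⟩

/-- Choosing an action from the protocol set itself makes the choice uniform, since
indistinguishable states have equal protocols. -/
theorem exists_isStrat (hG : G.Valid) (A : Set Ag) : ∃ σ, G.IsStrat A σ := by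
  have some_congr : ∀ {P Q : Set Act} (hP : P.Nonempty) (hQ : Q.Nonempty),
      P = Q → hP.some = hQ.some := by
    rintro _ _ _ _ rfl
    rfl
  refine ⟨fun i s => (hG.2.1 i s).some, fun i _ s _ => (hG.2.1 i s).some_mem, ?_⟩
  intro i _ s _ t _ hst
  exact some_congr _ _ (hG.2.2.1 i s t hst)

/-- The strategy-transfer clause of `IsSimulation`, for a fixed strategy simulator `ST`. -/
def IsStrategySimulator (G : iCGS Ag AP S Act) (G' : iCGS Ag AP S' Act') (A : Set Ag)
    (R : S → S' → Prop) (ST : Set S → Set S' → (Ag → S → Act) → (Ag → S' → Act')) : Prop :=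
  ∀ q q', R q q' →
    (∀ σ, G.IsPStrat A (G.CKN A q) σ →
      G'.IsPStrat A (G'.CKN A q') (ST (G.CKN A q) (G'.CKN A q') σ)) ∧
    (∀ r ∈ G.CKN A q, ∀ r' ∈ G'.CKN A q', R r r' →
      ∀ σ, G.IsPStrat A (G.CKN A q) σ →
        ∀ s' ∈ G'.succ A (ST (G.CKN A q) (G'.CKN A q') σ) r',
          ∃ s ∈ G.succ A σ r, R s s')

/-- The chosen pair `(t, t')` does not matter: see `IsSimulation.gluedStrat_eq`. -/
noncomputable def gluedStrat (G : iCGS Ag AP S Act) (G' : iCGS Ag AP S' Act') (A : Set Ag)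
    (R : S → S' → Prop) (ST : Set S → Set S' → (Ag → S → Act) → (Ag → S' → Act'))
    (σ : Ag → S → Act) (δ : Ag → S' → Act') : Ag → S' → Act' :=
  open Classical in
  fun i s' =>
    if h : ∃ p : S × S', R p.1 p.2 ∧ s' ∈ G'.CKN A p.2 then
      ST (G.CKN A h.choose.1) (G'.CKN A h.choose.2) σ i s'
    else δ i s'

theorem exists_outObj_lift {R : S → S' → Prop} {σ : Ag → S → Act} {σ' : Ag → S' → Act'}
    (hstep : ∀ s s', R s s' → ∀ u' ∈ G'.succ A σ' s', ∃ u ∈ G.succ A σ s, R u u')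
    {q : S} {q' : S'} (hq : R q q') {lam' : ℕ → S'} (hlam' : lam' ∈ G'.OutObj A σ' q') :
    ∃ lam ∈ G.OutObj A σ q, ∀ j, R (lam j) (lam' j) := by
  choose next next_mem next_rel using hstep
  let lift : ∀ j, {s : S // R s (lam' j)} := fun j =>
    Nat.rec ⟨q, hlam'.1 ▸ hq⟩
      (fun j p => ⟨next p.1 _ p.2 _ (hlam'.2 j), next_rel p.1 _ p.2 _ (hlam'.2 j)⟩) j
  exact ⟨fun j => (lift j).1, ⟨rfl, fun j => next_mem _ _ (lift j).2 _ (hlam'.2 j)⟩,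
    fun j => (lift j).2⟩

namespace IsSimulation

variable {R : S → S' → Prop}

theorem exists_ck_rel (hsim : G.IsSimulation G' A R) {q : S} {q' r' : S'} (hq : R q q')
    (h : G'.ck A q' r') : ∃ r, G.ck A q r ∧ R r r' := by
  induction h with
  | refl => exact ⟨q, .refl, hq⟩
  | tail _ hstep ih =>
    obtain ⟨r, hqr, hr⟩ := ih
    obtain ⟨i, hi, hind⟩ := hstep
    obtain ⟨s, hrs, hs⟩ := hsim.2.2.1 r _ hr i hi _ hind
    exact ⟨s, hqr.tail ⟨i, hi, hrs⟩, hs⟩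

theorem CKN_eq_of_CKN_eq (hG : G.Valid) (hsim : G.IsSimulation G' A R) {t₁ t₂ : S}
    {t'₁ t'₂ : S'} (h₁ : R t₁ t'₁) (h₂ : R t₂ t'₂) (h : G'.CKN A t'₁ = G'.CKN A t'₂) :
    G.CKN A t₁ = G.CKN A t₂ := by
  have ht'₂ : t'₂ ∈ G'.CKN A t'₁ := h ▸ mem_CKN_self t'₂
  obtain ⟨u, ht₁u, hu⟩ := hsim.exists_ck_rel h₁ ht'₂
  exact (CKN_eq_of_ck hG ht₁u).trans (hsim.2.2.2 u t₂ t'₂ hu h₂)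

theorem gluedStrat_eq (hG : G.Valid) (hG' : G'.Valid) (hsim : G.IsSimulation G' A R)
    (ST : Set S → Set S' → (Ag → S → Act) → (Ag → S' → Act')) (σ : Ag → S → Act)
    (δ : Ag → S' → Act') {t : S} {t' s' : S'} (ht : R t t') (hs' : s' ∈ G'.CKN A t')
    (i : Ag) : gluedStrat G G' A R ST σ δ i s' = ST (G.CKN A t) (G'.CKN A t') σ i s' := by
  have h : ∃ p : S × S', R p.1 p.2 ∧ s' ∈ G'.CKN A p.2 := ⟨(t, t'), ht, hs'⟩
  obtain ⟨hp, hsp⟩ := h.choose_spec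
  have e' := CKN_eq_of_mem_of_mem hG' hsp hs'
  rw [gluedStrat, dif_pos h, hsim.CKN_eq_of_CKN_eq hG hp ht e', e']

theorem isStrat_gluedStrat (hG : G.Valid) (hG' : G'.Valid) (hsim : G.IsSimulation G' A R)
    {ST : Set S → Set S' → (Ag → S → Act) → (Ag → S' → Act')}
    (hST : G.IsStrategySimulator G' A R ST) {σ : Ag → S → Act} (hσ : G.IsStrat A σ)
    {δ : Ag → S' → Act'} (hδ : G'.IsStrat A δ) : G'.IsStrat A (gluedStrat G G' A R ST σ δ) := by
  classical
  have hST' t t' (ht : R t t') := (hST t t' ht).1 σ (hσ.isPStrat _)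
  refine ⟨fun i hi s' _ => ?_, fun i hi s' _ u' _ hind => ?_⟩
  · by_cases hs' : ∃ p : S × S', R p.1 p.2 ∧ s' ∈ G'.CKN A p.2
    · obtain ⟨⟨t, t'⟩, ht, hs'⟩ := hs'
      rw [gluedStrat_eq hG hG' hsim ST σ δ ht hs']
      exact (hST' t t' ht).1 i hi s' hs'
    · rw [gluedStrat, dif_neg hs']
      exact hδ.1 i hi s' trivial
  · by_cases hs' : ∃ p : S × S', R p.1 p.2 ∧ s' ∈ G'.CKN A p.2
    · obtain ⟨⟨t, t'⟩, ht, hs'⟩ := hs'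
      have hu' : u' ∈ G'.CKN A t' := hs'.tail ⟨i, hi, hind⟩
      rw [gluedStrat_eq hG hG' hsim ST σ δ ht hs', gluedStrat_eq hG hG' hsim ST σ δ ht hu']
      exact (hST' t t' ht).2 i hi s' hs' u' hu' hind
    · have hu' : ¬∃ p : S × S', R p.1 p.2 ∧ u' ∈ G'.CKN A p.2 := fun ⟨p, hp, hu'⟩ =>
        hs' ⟨p, hp, hu'.tail ⟨i, hi, (hG'.1 i).symm hind⟩⟩
      rw [gluedStrat, gluedStrat, dif_neg hs', dif_neg hu']
      exact hδ.2 i hi s' trivial u' trivial hind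

theorem exists_succ_rel_of_gluedStrat (hG : G.Valid) (hG' : G'.Valid)
    (hsim : G.IsSimulation G' A R) {ST : Set S → Set S' → (Ag → S → Act) → (Ag → S' → Act')}
    (hST : G.IsStrategySimulator G' A R ST) {σ : Ag → S → Act} (hσ : G.IsStrat A σ)
    (δ : Ag → S' → Act') {r : S} {r' s' : S'} (hr : R r r')
    (hs' : s' ∈ G'.succ A (gluedStrat G G' A R ST σ δ) r') : ∃ s ∈ G.succ A σ r, R s s' := by
  obtain ⟨a, ha, htrans⟩ := hs'
  have hs'ST : s' ∈ G'.succ A (ST (G.CKN A r) (G'.CKN A r') σ) r' :=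
    ⟨a, fun i hi => (ha i hi).trans (gluedStrat_eq hG hG' hsim ST σ δ hr (mem_CKN_self r') i),
      htrans⟩
  exact (hST r r' hr).2 r (mem_CKN_self r) r' (mem_CKN_self r') hr σ (hσ.isPStrat _) s' hs'ST

theorem exists_out_lift (hsim : G.IsSimulation G' A R) {σ : Ag → S → Act}
    {σ' : Ag → S' → Act'}
    (hstep : ∀ s s', R s s' → ∀ u' ∈ G'.succ A σ' s', ∃ u ∈ G.succ A σ s, R u u')
    {q : S} {q' : S'} (hq : R q q') (x : Bool) :
    ∀ lam' ∈ G'.Out x A σ' q', ∃ lam ∈ G.Out x A σ q, ∀ j, R (lam j) (lam' j) := by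
  cases x with
  | false => exact fun lam' => exists_outObj_lift hstep hq
  | true =>
    rintro lam' (hobj | ⟨i, hi, r', hqr', hobj⟩)
    · obtain ⟨lam, hlam, hrel⟩ := exists_outObj_lift hstep hq hobj
      exact ⟨lam, .inl hlam, hrel⟩
    · obtain ⟨r, hqr, hr⟩ := hsim.2.2.1 q q' hq i hi r' hqr'
      obtain ⟨lam, hlam, hrel⟩ := exists_outObj_lift hstep hr hobj
      exact ⟨lam, .inr ⟨i, hi, r, hqr, hlam⟩, hrel⟩

theorem exists_strat_out_lift (hG : G.Valid) (hG' : G'.Valid) (hsim : G.IsSimulation G' A R)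
    {q : S} {q' : S'} (hq : R q q') {σ : Ag → S → Act} (hσ : G.IsStrat A σ) (x : Bool) :
    ∃ σ', G'.IsStrat A σ' ∧
      ∀ lam' ∈ G'.Out x A σ' q', ∃ lam ∈ G.Out x A σ q, ∀ j, R (lam j) (lam' j) := by
  obtain ⟨ST, hST⟩ : ∃ ST, G.IsStrategySimulator G' A R ST := hsim.1
  obtain ⟨δ, hδ⟩ := exists_isStrat hG' A
  exact ⟨gluedStrat G G' A R ST σ δ, isStrat_gluedStrat hG hG' hsim hST hσ hδ,
    exists_out_lift hsim (fun _ _ hs _ hu' =>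
      exists_succ_rel_of_gluedStrat hG hG' hsim hST hσ δ hs hu') hq x⟩

end IsSimulation

namespace IsBisimulation

variable {R : S → S' → Prop}

mutual

theorem sSat_iff (hG : G.Valid) (hG' : G'.Valid) (hR : G.IsBisimulation G' A R) (x : Bool) :
    ∀ φ : SF AP Ag, SOnly A φ → ∀ q q', R q q' → (SSat G x q φ ↔ SSat G' x q' φ)
  | .atom p, _, q, q', hq => by
    rw [SSat, SSat, hR.1.2.1 q q' hq]
  | .neg φ, hφ, q, q', hq => not_congr (sSat_iff hG hG' hR x φ hφ q q' hq)
  | .imp φ χ, hφ, q, q', hq =>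
    imp_congr (sSat_iff hG hG' hR x φ hφ.1 q q' hq) (sSat_iff hG hG' hR x χ hφ.2 q q' hq)
  | .coal B ψ, ⟨hB, hψ⟩, q, q', hq => by
    have hψ_iff := pSat_iff hG hG' hR x ψ hψ
    subst hB
    constructor
    · rintro ⟨σ, hσ, hwin⟩
      obtain ⟨σ', hσ', hlift⟩ := hR.1.exists_strat_out_lift hG hG' hq hσ x
      refine ⟨σ', hσ', fun lam' hlam' => ?_⟩
      obtain ⟨lam, hlam, hrel⟩ := hlift lam' hlam'
      exact (hψ_iff lam lam' hrel).mp (hwin lam hlam)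
    · rintro ⟨σ', hσ', hwin⟩
      obtain ⟨σ, hσ, hlift⟩ := hR.2.exists_strat_out_lift hG' hG hq hσ' x
      refine ⟨σ, hσ, fun lam hlam => ?_⟩
      obtain ⟨lam', hlam', hrel⟩ := hlift lam hlam
      exact (hψ_iff lam lam' hrel).mpr (hwin lam' hlam')

theorem pSat_iff (hG : G.Valid) (hG' : G'.Valid) (hR : G.IsBisimulation G' A R) (x : Bool) :
    ∀ ψ : PF AP Ag, POnly A ψ → ∀ (lam : ℕ → S) (lam' : ℕ → S'),
      (∀ j, R (lam j) (lam' j)) → (PSat G x lam ψ ↔ PSat G' x lam' ψ)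
  | .of φ, hφ, lam, lam', h => sSat_iff hG hG' hR x φ hφ (lam 0) (lam' 0) (h 0)
  | .neg ψ, hψ, lam, lam', h => not_congr (pSat_iff hG hG' hR x ψ hψ lam lam' h)
  | .imp ψ χ, hψ, lam, lam', h =>
    imp_congr (pSat_iff hG hG' hR x ψ hψ.1 lam lam' h) (pSat_iff hG hG' hR x χ hψ.2 lam lam' h)
  | .next ψ, hψ, _, _, h => pSat_iff hG hG' hR x ψ hψ _ _ fun j => h (j + 1)
  | .untl ψ χ, hψ, _, _, h =>
    exists_congr fun j => and_congr (pSat_iff hG hG' hR x χ hψ.2 _ _ fun n => h (n + j))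
      (forall₂_congr fun k _ => pSat_iff hG hG' hR x ψ hψ.1 _ _ fun n => h (n + k))

end

end IsBisimulation

end iCGS

/-- the preservation theorem. An `A`-bisimulation preserves all
state and path `A`-formulas of ATL*, under both the subjective (`x = true`)
and objective (`x = false`) imperfect-information memoryless semantics. -/
theorem bisimulation_preserves_ATLstar {Ag AP S S' Act Act' : Type}
    (G : iCGS Ag AP S Act) (G' : iCGS Ag AP S' Act')
    (hG : G.Valid) (hG' : G'.Valid) (A : Set Ag) (R : S → S' → Prop)
    (hR : G.IsBisimulation G' A R) (x : Bool) :
    (∀ q q', R q q' → ∀ φ : SF AP Ag, SOnly A φ →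
      (SSat G x q φ ↔ SSat G' x q' φ)) ∧
    (∀ (lam : ℕ → S) (lam' : ℕ → S'), (∀ i, R (lam i) (lam' i)) →
      ∀ ψ : PF AP Ag, POnly A ψ →
      (PSat G x lam ψ ↔ PSat G' x lam' ψ)) :=
  ⟨fun q q' hq φ hφ => hR.sSat_iff hG hG' x φ hφ q q' hq,
    fun lam lam' h ψ hψ => hR.pSat_iff hG hG' x ψ hψ lam lam' h⟩
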